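/- Let Q be a finite quiver, S a reduced set of paths of length at least 2, and n ≥ 1. If (w, v) is an n-quasioverlap for S, then there exists a unique path w' such that w' is a left divisor of w and (w', v) is an (n−1)-quasioverlap for S. -/

import Mathlib

universe u v

/-! Combinatorics of paths in a quiver: divisibility, overlaps, quasioverlaps. -/

/-- The type of all paths in a quiver `V`, bundled with their endpoints. -/
abbrev PathIn (V : Type u) [Quiver.{v + 1} V] : Type (max u (v + 1)) :=
  Σ a b : V, Quiver.Path a b

namespace PathIn

variable {V : Type u} [Quiver.{v + 1} V]

/-- Source of a bundled path. -/
def src (p : PathIn V) : V := p.1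

/-- Target of a bundled path. -/
def tgt (p : PathIn V) : V := p.2.1

/-- Length of a bundled path. -/
def len (p : PathIn V) : ℕ := p.2.2.length

/-- The path of length zero at a vertex. -/
def vert (a : V) : PathIn V := ⟨a, a, Quiver.Path.nil⟩

/-- Concatenation of bundled paths (junk value `p` if the endpoints do not match). -/
noncomputable def comp (p q : PathIn V) : PathIn V :=
  open Classical in
  if h : p.tgt = q.src then ⟨p.1, q.2.1, p.2.2.comp (q.2.2.cast h.symm rfl)⟩ else p

/-- `LDiv p q` : `p` divides `q` on the left, i.e. `q = p v` for some path `v`. -/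
def LDiv (p q : PathIn V) : Prop :=
  ∃ v : PathIn V, p.tgt = v.src ∧ q = p.comp v

/-- `RDiv p q` : `p` divides `q` on the right, i.e. `q = u p` for some path `u`. -/
def RDiv (p q : PathIn V) : Prop :=
  ∃ u : PathIn V, u.tgt = p.src ∧ q = u.comp p

/-- `Div p q` : `p` divides `q`, i.e. `q = u p v` for some paths `u, v`. -/
def Div (p q : PathIn V) : Prop :=
  ∃ u v : PathIn V, u.tgt = p.src ∧ p.tgt = v.src ∧ q = (u.comp p).comp v

/-- A set of paths is reduced if no element of it properly divides another element. -/
def Reduced (S : Set (PathIn V)) : Prop :=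
  ∀ q ∈ S, ∀ p ∈ S, p ≠ q → ¬ Div p q

/-- `p` is an `S`-path if some element of `S` divides it on the right. -/
def IsSPath (S : Set (PathIn V)) (p : PathIn V) : Prop :=
  ∃ s ∈ S, RDiv s p

/-- `q` `S`-vanishes `p` (written `q ∣_S p`): `p = q u` where no element of `S` divides `u`. -/
def SVan (S : Set (PathIn V)) (q p : PathIn V) : Prop :=
  ∃ u : PathIn V, q.tgt = u.src ∧ p = q.comp u ∧ ∀ s ∈ S, ¬ Div s u

/-- `q` almost `S`-vanishes `p` (written `q ∣_S^a p`): `p = q u`, `q` does not `S`-vanish `p`,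
and for every factorization `u = u₁ u₂` with `u₂` of positive length, `q` `S`-vanishes `q u₁`. -/
def ASVan (S : Set (PathIn V)) (q p : PathIn V) : Prop :=
  ∃ u : PathIn V, q.tgt = u.src ∧ p = q.comp u ∧ ¬ SVan S q p ∧
    ∀ u₁ u₂ : PathIn V, u₁.tgt = u₂.src → u = u₁.comp u₂ → 0 < u₂.len →
      SVan S q (q.comp u₁)

/-- The set of `n`-overlaps of a set of paths `S`. -/
def Overlaps (S : Set (PathIn V)) : ℕ → Set (PathIn V)
  | 0 => {p | p.len = 1}
  | 1 => S
  | (n + 2) => {w | ∃ w₁ ∈ Overlaps S (n + 1), ∃ w₂ ∈ Overlaps S n,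
      SVan S w₁ w ∧ ASVan S w₂ w}

/-- The set of `n`-quasioverlaps of a set of paths `S`: pairs `(w, v)` with `v` of
positive length. -/
def QOverlaps (S : Set (PathIn V)) : ℕ → Set (PathIn V × PathIn V)
  | 0 => {wv | wv.1.len = 0 ∧ 0 < wv.2.len ∧ wv.2.tgt = wv.1.src}
  | 1 => {wv | 0 < wv.1.len ∧ 0 < wv.2.len ∧ wv.2.tgt = wv.1.src ∧ wv.2.comp wv.1 ∈ S}
  | (n + 2) => {wv | ∃ w₁, (w₁, wv.2) ∈ QOverlaps S (n + 1) ∧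
      ∃ w₂, (w₂, wv.2) ∈ QOverlaps S n ∧ SVan S w₁ wv.1 ∧ ASVan S w₂ wv.1}

/-- `sup` of the lengths of the `n`-overlaps of `S`, in `EReal` (`-∞` if there are none). -/
noncomputable def maxo (S : Set (PathIn V)) (n : ℕ) : EReal :=
  sSup ((fun w => (w.len : EReal)) '' Overlaps S n)

/-- `inf` of the lengths of the `n`-overlaps of `S`, in `EReal` (`+∞` if there are none). -/
noncomputable def mino (S : Set (PathIn V)) (n : ℕ) : EReal :=
  sInf ((fun w => (w.len : EReal)) '' Overlaps S n)

/-- `sup` of the lengths of the first components of `n`-quasioverlaps of `S`. -/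
noncomputable def maxqo (S : Set (PathIn V)) (n : ℕ) : EReal :=
  sSup ((fun w => (w.len : EReal)) '' {w | ∃ v, (w, v) ∈ QOverlaps S n})

/-- `inf` of the lengths of the first components of `n`-quasioverlaps of `S`. -/
noncomputable def minqo (S : Set (PathIn V)) (n : ℕ) : EReal :=
  sInf ((fun w => (w.len : EReal)) '' {w | ∃ v, (w, v) ∈ QOverlaps S n})

end PathIn

/-!
Left divisors of a path are prefixes of it, hence pairwise comparable, so uniqueness of `w'`
follows once the `n`-quasioverlaps with a fixed `v` form an antichain for left divisibility.
This is proved by induction on `n`; for `n = 1` it is the reducedness of `S`. For `n ≥ 2`, an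
`n`-quasioverlap `w` comes with an `(n-1)`-quasioverlap `w₁ ∣_S w` and an `(n-2)`-quasioverlap
`w₂ ∣_S^a w`, and `w₂` left-divides `w₁`. If `w` left-divides another such `w'`, all of these
left-divide `w'`, so by induction `w₁ = w₁'` and `w₂ = w₂'`. But `w` is the shortest extension
of `w₂` that `w₂` does not `S`-vanish, so `w = w'`.
-/

namespace Quiver.Path

variable {V : Type u} [Quiver.{v + 1} V]

def arrows {a : V} : ∀ {b : V}, Path a b → List (Σ a b : V, a ⟶ b)
  | _, nil => []
  | _, cons p e => arrows p ++ [⟨_, _, e⟩]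

@[simp] theorem arrows_nil {a : V} : (nil : Path a a).arrows = [] := rfl

@[simp] theorem arrows_cons {a b c : V} (p : Path a b) (e : b ⟶ c) :
    (p.cons e).arrows = p.arrows ++ [⟨b, c, e⟩] := rfl

@[simp] theorem arrows_comp {a b c : V} (p : Path a b) (q : Path b c) :
    (p.comp q).arrows = p.arrows ++ q.arrows := by
  induction q with
  | nil => simp
  | cons q e ih => simp [ih]

theorem eq_and_heq_of_arrows_eq {a b c : V} (p : Path a b) (q : Path a c)
    (h : p.arrows = q.arrows) : b = c ∧ HEq p q := by
  induction p generalizing c with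
  | nil =>
    cases q with
    | nil => exact ⟨rfl, .rfl⟩
    | cons q f => simp at h
  | cons p e ih =>
    cases q with
    | nil => simp at h
    | cons q f =>
      obtain ⟨hpq, hef⟩ := List.append_inj' h rfl
      obtain ⟨rfl, hpq⟩ := ih q hpq
      cases eq_of_heq hpq
      simp only [List.cons.injEq, Sigma.mk.injEq, heq_eq_eq, true_and, and_true] at hef
      obtain ⟨rfl, hef⟩ := hef
      cases eq_of_heq hef
      exact ⟨rfl, .rfl⟩

theorem exists_eq_comp_of_arrows_eq_append {a b : V} (p : Path a b)
    (l₁ l₂ : List (Σ a b : V, a ⟶ b)) (h : p.arrows = l₁ ++ l₂) :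
    ∃ (c : V) (p₁ : Path a c) (p₂ : Path c b), p = p₁.comp p₂ ∧ p₁.arrows = l₁ := by
  induction p generalizing l₂ with
  | nil => exact ⟨a, nil, nil, rfl, (List.append_eq_nil_iff.mp h.symm).1.symm⟩
  | @cons b' c p e ih =>
    rcases List.eq_nil_or_concat l₂ with rfl | ⟨l₂, x, rfl⟩
    · exact ⟨c, p.cons e, nil, rfl, by simpa using h⟩
    · rw [arrows_cons, List.concat_eq_append, ← List.append_assoc] at h
      obtain ⟨c', p₁, p₂, rfl, hp₁⟩ := ih l₂ (List.append_inj' h rfl).1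
      exact ⟨c', p₁, p₂.cons e, rfl, hp₁⟩

end Quiver.Path

namespace PathIn

variable {V : Type u} [Quiver.{v + 1} V]

theorem mk_comp_mk {a b c : V} (p : Quiver.Path a b) (q : Quiver.Path b c) :
    comp ⟨a, b, p⟩ ⟨b, c, q⟩ = ⟨a, c, p.comp q⟩ := by
  simp [comp, tgt, src]

@[simp] theorem src_comp (p q : PathIn V) : (p.comp q).src = p.src := by
  unfold comp; split <;> rfl

theorem tgt_comp {p q : PathIn V} (h : p.tgt = q.src) : (p.comp q).tgt = q.tgt := by
  obtain ⟨a, b, p⟩ := p; obtain ⟨b', c, q⟩ := q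
  cases (h : b = b')
  rw [mk_comp_mk]; rfl

theorem comp_assoc {p q r : PathIn V} (hpq : p.tgt = q.src) (hqr : q.tgt = r.src) :
    (p.comp q).comp r = p.comp (q.comp r) := by
  obtain ⟨a, b, p⟩ := p; obtain ⟨b', c, q⟩ := q; obtain ⟨c', d, r⟩ := r
  cases (hpq : b = b'); cases (hqr : c = c')
  simp only [mk_comp_mk, Quiver.Path.comp_assoc]

theorem comp_left_cancel {p q q' : PathIn V} (hq : p.tgt = q.src) (hq' : p.tgt = q'.src)
    (h : p.comp q = p.comp q') : q = q' := by
  obtain ⟨a, b, p⟩ := p; obtain ⟨b', c, q⟩ := q; obtain ⟨b'', c', q'⟩ := q'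
  cases (hq : b = b'); cases (hq' : b = b'')
  simp only [mk_comp_mk, Sigma.mk.injEq, heq_eq_eq, true_and] at h
  obtain ⟨rfl, h⟩ := h
  rw [Quiver.Path.comp_inj_right.mp (eq_of_heq h)]

theorem comp_vert (p : PathIn V) : p.comp (vert p.tgt) = p := by
  obtain ⟨a, b, p⟩ := p
  exact mk_comp_mk p .nil

theorem vert_comp (p : PathIn V) : (vert p.src).comp p = p := by
  obtain ⟨a, b, p⟩ := p
  rw [vert, src, mk_comp_mk, Quiver.Path.nil_comp]

theorem eq_vert_of_len_zero {p : PathIn V} (h : p.len = 0) : p = vert p.src := by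
  obtain ⟨a, b, p⟩ := p
  cases p.eq_of_length_zero h
  rw [p.eq_nil_of_length_zero h]; rfl

def arrows (p : PathIn V) : List (Σ a b : V, a ⟶ b) := p.2.2.arrows

theorem arrows_comp {p q : PathIn V} (h : p.tgt = q.src) :
    (p.comp q).arrows = p.arrows ++ q.arrows := by
  obtain ⟨a, b, p⟩ := p; obtain ⟨b', c, q⟩ := q
  cases (h : b = b')
  rw [mk_comp_mk]
  exact Quiver.Path.arrows_comp p q

theorem ext_arrows {p q : PathIn V} (hsrc : p.src = q.src) (h : p.arrows = q.arrows) :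
    p = q := by
  obtain ⟨a, b, p⟩ := p; obtain ⟨a', c, q⟩ := q
  cases (hsrc : a = a')
  obtain ⟨rfl, hpq⟩ := Quiver.Path.eq_and_heq_of_arrows_eq p q h
  rw [eq_of_heq hpq]

theorem LDiv.src_eq {p q : PathIn V} (h : LDiv p q) : p.src = q.src := by
  obtain ⟨u, -, rfl⟩ := h
  exact (src_comp p u).symm

theorem LDiv.arrows_prefix {p q : PathIn V} (h : LDiv p q) : p.arrows <+: q.arrows := by
  obtain ⟨u, hu, rfl⟩ := h
  exact ⟨u.arrows, (arrows_comp hu).symm⟩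

theorem ldiv_of_arrows_prefix {p q : PathIn V} (hsrc : p.src = q.src)
    (h : p.arrows <+: q.arrows) : LDiv p q := by
  obtain ⟨l, hl⟩ := h
  obtain ⟨a, b, q⟩ := q
  obtain ⟨c, q₁, q₂, rfl, hq₁⟩ := q.exists_eq_comp_of_arrows_eq_append _ _ hl.symm
  obtain rfl : (⟨a, c, q₁⟩ : PathIn V) = p := ext_arrows hsrc.symm hq₁
  exact ⟨⟨c, b, q₂⟩, rfl, (mk_comp_mk q₁ q₂).symm⟩

theorem ldiv_or_ldiv_of_ldiv {p q r : PathIn V} (hp : LDiv p r) (hq : LDiv q r) :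
    LDiv p q ∨ LDiv q p :=
  (List.prefix_or_prefix_of_prefix hp.arrows_prefix hq.arrows_prefix).imp
    (ldiv_of_arrows_prefix (hp.src_eq.trans hq.src_eq.symm))
    (ldiv_of_arrows_prefix (hq.src_eq.trans hp.src_eq.symm))

theorem _root_.IsAntichain.eq_of_ldiv_of_ldiv {T : Set (PathIn V)} (hT : IsAntichain LDiv T)
    {p q r : PathIn V} (hpT : p ∈ T) (hqT : q ∈ T) (hp : LDiv p r) (hq : LDiv q r) : p = q :=
  (ldiv_or_ldiv_of_ldiv hp hq).elim (hT.eq hpT hqT) (hT.eq' hpT hqT)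

theorem LDiv.trans {p q r : PathIn V} (hpq : LDiv p q) (hqr : LDiv q r) : LDiv p r := by
  obtain ⟨x, hx, rfl⟩ := hpq
  obtain ⟨y, hy, rfl⟩ := hqr
  rw [tgt_comp hx] at hy
  exact ⟨x.comp y, by rw [src_comp]; exact hx, comp_assoc hx hy⟩

theorem LDiv.div {p q : PathIn V} (h : LDiv p q) : Div p q := by
  obtain ⟨u, hu, rfl⟩ := h
  exact ⟨vert p.src, u, rfl, hu, by rw [vert_comp]⟩

theorem Div.comp_left {s q : PathIn V} (h : Div s q) {x : PathIn V} (hx : x.tgt = q.src) :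
    Div s (x.comp q) := by
  obtain ⟨u, y, hu, hy, rfl⟩ := h
  rw [src_comp, src_comp] at hx
  refine ⟨x.comp u, y, by rw [tgt_comp hx]; exact hu, hy, ?_⟩
  rw [comp_assoc hx hu, comp_assoc (q := u.comp s) (by rwa [src_comp]) (by rwa [tgt_comp hu])]

theorem SVan.ldiv {S : Set (PathIn V)} {q p : PathIn V} (h : SVan S q p) : LDiv q p :=
  let ⟨u, hu, hp, _⟩ := h
  ⟨u, hu, hp⟩

theorem ASVan.ldiv_of_svan {S : Set (PathIn V)} {p t A : PathIn V} (hp : ASVan S p A)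
    (ht : SVan S t A) : LDiv p t := by
  obtain ⟨f, hf, rfl, hpA, -⟩ := hp
  obtain ⟨c, hc, hA, hcS⟩ := ht
  refine (ldiv_or_ldiv_of_ldiv ⟨f, hf, rfl⟩ ⟨c, hc, hA⟩).resolve_right ?_
  rintro ⟨x, hx, rfl⟩
  have hxf : x.tgt = f.src := by rw [← hf, tgt_comp hx]
  have hc_eq : c = x.comp f := comp_left_cancel hc (by rw [src_comp]; exact hx)
    (hA.symm.trans (comp_assoc hx hxf))
  obtain ⟨s, hs, hsf⟩ : ∃ s ∈ S, Div s f := by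
    by_contra! hf_free
    exact hpA ⟨f, hf, rfl, hf_free⟩
  exact hcS s hs (hc_eq ▸ hsf.comp_left hxf)

theorem ASVan.eq_of_ldiv {S : Set (PathIn V)} {p A B : PathIn V} (hA : ASVan S p A)
    (hB : ASVan S p B) (hAB : LDiv A B) : A = B := by
  obtain ⟨f, hf, rfl, hpA, -⟩ := hA
  obtain ⟨g, hg, rfl, -, hpB⟩ := hB
  obtain ⟨h, hh, hB⟩ := hAB
  rw [tgt_comp hf] at hh
  by_cases hh0 : h.len = 0
  · rw [hB, eq_vert_of_len_zero hh0, ← hh, ← tgt_comp hf, comp_vert]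
  · have hg_eq : g = f.comp h :=
      comp_left_cancel hg (by rw [src_comp]; exact hf) (hB.trans (comp_assoc hf hh))
    exact absurd (hpB f h hh hg_eq (Nat.pos_of_ne_zero hh0)) hpA

section QOverlaps

variable {S : Set (PathIn V)} {v : PathIn V}

theorem exists_ldiv_mem_qOverlaps_of_mem_qOverlaps_succ {n : ℕ} {w : PathIn V}
    (hw : (w, v) ∈ QOverlaps S (n + 1)) : ∃ w', LDiv w' w ∧ (w', v) ∈ QOverlaps S n := by
  rcases n with _ | n
  · obtain ⟨-, hv, hvw, -⟩ := hw
    exact ⟨vert w.src, ⟨w, rfl, (vert_comp w).symm⟩, rfl, hv, hvw⟩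
  · obtain ⟨w₁, hw₁, -, -, hw₁w, -⟩ := hw
    exact ⟨w₁, hw₁w.ldiv, hw₁⟩

theorem isAntichain_qOverlaps_zero : IsAntichain LDiv {w | (w, v) ∈ QOverlaps S 0} := by
  intro A hA B hB hne hAB
  refine hne ?_
  rw [eq_vert_of_len_zero (p := A) hA.1, eq_vert_of_len_zero (p := B) hB.1, hAB.src_eq]

theorem isAntichain_qOverlaps_one (hred : Reduced S) :
    IsAntichain LDiv {w | (w, v) ∈ QOverlaps S 1} := by
  rintro A ⟨-, -, hvA : v.tgt = A.src, hA : v.comp A ∈ S⟩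
    B ⟨-, -, hvB : v.tgt = B.src, hB : v.comp B ∈ S⟩ hne hAB
  have hv_AB : LDiv (v.comp A) (v.comp B) := by
    obtain ⟨h, hh, rfl⟩ := hAB
    exact ⟨h, by rwa [tgt_comp hvA], (comp_assoc hvA hh).symm⟩
  have hv_eq : v.comp A = v.comp B := by
    by_contra hv_ne
    exact hred _ hB _ hA hv_ne hv_AB.div
  exact hne (comp_left_cancel hvA hvB hv_eq)

theorem isAntichain_qOverlaps_add_two {k : ℕ}
    (h₁ : IsAntichain LDiv {w | (w, v) ∈ QOverlaps S (k + 1)})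
    (h₀ : IsAntichain LDiv {w | (w, v) ∈ QOverlaps S k}) :
    IsAntichain LDiv {w | (w, v) ∈ QOverlaps S (k + 2)} := by
  rintro A ⟨tA, htA, pA, hpA, htA_A, hpA_A⟩ B ⟨tB, htB, pB, hpB, htB_B, hpB_B⟩ hne hAB
  obtain rfl : tA = tB := h₁.eq_of_ldiv_of_ldiv htA htB (htA_A.ldiv.trans hAB) htB_B.ldiv
  obtain rfl : pA = pB := h₀.eq_of_ldiv_of_ldiv hpA hpB (hpA_A.ldiv_of_svan htA_A)
    (hpB_B.ldiv_of_svan htB_B)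
  exact hne (hpA_A.eq_of_ldiv hpB_B hAB)

theorem isAntichain_qOverlaps (hred : Reduced S) (v : PathIn V) :
    ∀ n, IsAntichain LDiv {w | (w, v) ∈ QOverlaps S n}
  | 0 => isAntichain_qOverlaps_zero
  | 1 => isAntichain_qOverlaps_one hred
  | n + 2 => isAntichain_qOverlaps_add_two (isAntichain_qOverlaps hred v (n + 1))
      (isAntichain_qOverlaps hred v n)

end QOverlaps

end PathIn

/-- if `(w, v)` is an `n`-quasioverlap for a reduced set of paths `S` (`n ≥ 1`),
there is a unique path `w'` dividing `w` on the left such that `(w', v)` is an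
`(n-1)`-quasioverlap for `S`. -/
theorem unique_left_divisor_quasioverlap {V : Type u} [Quiver.{v + 1} V]
    [Fintype V] [∀ a b : V, Fintype (a ⟶ b)]
    (S : Set (PathIn V)) (hS : ∀ p ∈ S, 2 ≤ p.len) (hred : PathIn.Reduced S)
    (n : ℕ) (hn : 1 ≤ n) (w v : PathIn V) (hw : (w, v) ∈ PathIn.QOverlaps S n) :
    ∃! w' : PathIn V, PathIn.LDiv w' w ∧ (w', v) ∈ PathIn.QOverlaps S (n - 1) := by
  obtain ⟨m, rfl⟩ : ∃ m, n = m + 1 := ⟨n - 1, by omega⟩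
  rw [Nat.add_sub_cancel]
  obtain ⟨w', hw'⟩ := PathIn.exists_ldiv_mem_qOverlaps_of_mem_qOverlaps_succ hw
  exact ⟨w', hw', fun y hy => (PathIn.isAntichain_qOverlaps hred v m).eq_of_ldiv_of_ldiv
    hy.2 hw'.2 hy.1 hw'.1⟩
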